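/- arXiv:1305.0069 — 2 statements merged into one kernel-verified Lean document; each statement's English description precedes it below -/
import Mathlib

section
/- Any permutation of n elements can be sorted to the identity using at most bp(π) monotone block moves, where bp(π) is the number of breakpoints; in particular bc(π) ≤ bp(π). -/
/-- The identity permutation of `{1,…,n}` as a list `[1, 2, …, n]`. -/
def idL (n : ℕ) : List ℕ := (List.range n).map (· + 1)

/-- `l` is a permutation of `{1,…,n}` (written as a list). -/
def IsPermList (n : ℕ) (l : List ℕ) : Prop := l.Perm (idL n)

/-- The extension of `π` by `π₀ = 0` and `π_{n+1} = n+1`. -/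
def ext (n : ℕ) (l : List ℕ) : List ℕ := 0 :: (l ++ [n + 1])

/-- Number of adjacent pairs of the extended permutation satisfying `p`. -/
def adjCount (p : ℕ → ℕ → Bool) (n : ℕ) (l : List ℕ) : ℕ :=
  ((ext n l).zip (ext n l).tail).countP (fun q => p q.1 q.2)

/-- Number of breakpoints: adjacent pairs with `π_{i+1} ≠ π_i + 1`. -/
def bp (n : ℕ) (l : List ℕ) : ℕ := adjCount (fun a b => b ≠ a + 1) n l

/-- Number of descents: adjacent pairs with `π_i > π_{i+1}`. -/
def des (n : ℕ) (l : List ℕ) : ℕ := adjCount (fun a b => b < a) n l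

/-- Number of gaps: adjacent pairs with `π_{i+1} > π_i + 1`. -/
def gap (n : ℕ) (l : List ℕ) : ℕ := adjCount (fun a b => a + 1 < b) n l

/-- Number of inverse descents: pairs of positions `i < j` with `π_i = π_j + 1`. -/
def invDes (l : List ℕ) : ℕ :=
  (Finset.univ.filter (fun p : Fin l.length × Fin l.length =>
    (p.1 : ℕ) < (p.2 : ℕ) ∧ l.get p.1 = l.get p.2 + 1)).card

/-- Number of inverse gaps: pairs of positions with `i > j + 1` and `π_i = π_j + 1`. -/
def invGap (l : List ℕ) : ℕ :=
  (Finset.univ.filter (fun p : Fin l.length × Fin l.length =>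
    (p.2 : ℕ) + 1 < (p.1 : ℕ) ∧ l.get p.1 = l.get p.2 + 1)).card

/-- `l'` is obtained from `l` by a block move: exchanging two nonempty
consecutive blocks `B` and `C`. -/
def IsBlockMove (l l' : List ℕ) : Prop :=
  ∃ A B C D : List ℕ, B ≠ [] ∧ C ≠ [] ∧ l = A ++ B ++ C ++ D ∧ l' = A ++ C ++ B ++ D

/-- A monotone block move: every element of the first (left) exchanged block
exceeds every element of the second (right) exchanged block. -/
def IsMonotoneBlockMove (l l' : List ℕ) : Prop :=
  ∃ A B C D : List ℕ, B ≠ [] ∧ C ≠ [] ∧ (∀ x ∈ B, ∀ y ∈ C, y < x) ∧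
    l = A ++ B ++ C ++ D ∧ l' = A ++ C ++ B ++ D

/-- A single-element block move: one of the two exchanged blocks has size one. -/
def IsSingleBlockMove (l l' : List ℕ) : Prop :=
  ∃ A B C D : List ℕ, B ≠ [] ∧ C ≠ [] ∧ (B.length = 1 ∨ C.length = 1) ∧
    l = A ++ B ++ C ++ D ∧ l' = A ++ C ++ B ++ D

/-- A monotone single-element block move. -/
def IsMonoSingleBlockMove (l l' : List ℕ) : Prop :=
  ∃ A B C D : List ℕ, B ≠ [] ∧ C ≠ [] ∧ (B.length = 1 ∨ C.length = 1) ∧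
    (∀ x ∈ B, ∀ y ∈ C, y < x) ∧ l = A ++ B ++ C ++ D ∧ l' = A ++ C ++ B ++ D

/-- `l` can be transformed into `target` by `t` moves of type `R`. -/
def SortsIn (R : List ℕ → List ℕ → Prop) (l target : List ℕ) (t : ℕ) : Prop :=
  ∃ c : ℕ → List ℕ, c 0 = l ∧ c t = target ∧ ∀ i < t, R (c i) (c (i + 1))

/-- Length of the longest increasing subsequence of `l`. -/
def lis (l : List ℕ) : ℕ :=
  ((l.sublists.filter (fun s => decide (List.IsChain (· < ·) s))).map List.length).foldr max 0

/-!
Let `1, …, m` be the longest sorted prefix of `π`. Then `m + 1` occurs further right, at the start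
of a maximal run `m + 1, …, m + c + 1` of consecutive values, and the nonempty block `X` between
the prefix and the run consists of values larger than `m + c + 1`. Exchanging `X` with the run is
a monotone block move; it destroys the three breakpoints `(m, X)`, `(X, m + 1)` and
`(m + c + 1, ·)` and creates at most the two breakpoints `(m + c + 1, X)` and `(X, ·)`, so every
step lowers `bp` by at least one. (Moving `m + 1` alone is not enough: that gains nothing when
`m + 2` follows it.)
-/

open List

def breaks : ℕ → List ℕ → ℕ
  | _, [] => 0
  | a, b :: l => (if b = a + 1 then 0 else 1) + breaks b l

theorem breaks_append (a : ℕ) (u v : List ℕ) :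
    breaks a (u ++ v) = breaks a u + breaks (u.getLastD a) v := by
  induction u generalizing a with
  | nil => simp [breaks]
  | cons b u ih => simp only [cons_append, breaks, ih, getLastD_cons, Nat.add_assoc]

theorem breaks_range'_append (a m : ℕ) (v : List ℕ) :
    breaks a (range' (a + 1) m ++ v) = breaks (a + m) v := by
  induction m generalizing a with
  | zero => rfl
  | succ m ih => simp [range'_succ, breaks, ih (a + 1), Nat.add_assoc, Nat.add_comm 1 m]

theorem countP_zip_cons_eq_breaks (a : ℕ) (l : List ℕ) :
    ((a :: l).zip l).countP (fun q => decide (q.2 ≠ q.1 + 1)) = breaks a l := by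
  induction l generalizing a with
  | nil => rfl
  | cons b l ih => by_cases h : b = a + 1 <;> simp [breaks, h, ← ih, Nat.add_comm]

theorem bp_eq_breaks (n : ℕ) (l : List ℕ) : bp n l = breaks 0 (l ++ [n + 1]) :=
  countP_zip_cons_eq_breaks 0 _

theorem exists_eq_range'_append (s : ℕ) (l : List ℕ) :
    ∃ m r, l = range' s m ++ r ∧ r.head? ≠ some (s + m) := by
  induction l generalizing s with
  | nil => exact ⟨0, [], rfl, by simp⟩
  | cons b l ih =>
    by_cases hb : b = s
    · obtain ⟨m, r, rfl, hr⟩ := ih (s + 1)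
      exact ⟨m + 1, r, by simp [range'_succ, hb], by rwa [Nat.add_right_comm, Nat.add_assoc] at hr⟩
    · exact ⟨0, b :: l, rfl, by simpa using hb⟩

theorem breaks_swap_run_lt (a c : ℕ) (X Z : List ℕ) (hXne : X ≠ [])
    (hX : ∀ y ∈ X, a + c + 1 < y) (hZne : Z ≠ []) (hZ : Z.head? ≠ some (a + c + 2)) :
    breaks a (range' (a + 1) (c + 1) ++ (X ++ Z)) <
      breaks a (X ++ (range' (a + 1) (c + 1) ++ Z)) := by
  obtain ⟨x, X, rfl⟩ := exists_cons_of_ne_nil hXne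
  obtain ⟨z, Z, rfl⟩ := exists_cons_of_ne_nil hZne
  have hx := hX x mem_cons_self
  have hlast := hX _ getLastD_mem_cons
  simp only [head?_cons, ne_eq, Option.some.injEq] at hZ
  rw [breaks_range'_append, breaks_append, breaks_append, getLastD_cons, getLastD_cons, range'_succ]
  simp only [cons_append, breaks, breaks_range'_append]
  split_ifs <;> omega

theorem idL_eq_range' (n : ℕ) : idL n = range' 1 n := by
  simp [idL, range'_eq_map_range, Nat.add_comm]

theorem IsPermList.mem_iff {n : ℕ} {l : List ℕ} (hl : IsPermList n l) {x : ℕ} :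
    x ∈ l ↔ 1 ≤ x ∧ x ≤ n := by
  rw [List.Perm.mem_iff hl, idL_eq_range', mem_range'_1]
  omega

theorem IsPermList.nodup {n : ℕ} {l : List ℕ} (hl : IsPermList n l) : l.Nodup :=
  (List.Perm.nodup_iff hl).2 (idL_eq_range' n ▸ nodup_range')

theorem IsPermList.length_eq {n : ℕ} {l : List ℕ} (hl : IsPermList n l) : l.length = n := by
  simpa [idL_eq_range'] using List.Perm.length_eq hl

theorem IsPermList.exists_eq_block_append_run {n : ℕ} {l : List ℕ} (hl : IsPermList n l)
    (hid : l ≠ idL n) :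
    ∃ m c X Y, l = range' 1 m ++ X ++ range' (m + 1) (c + 1) ++ Y ∧ X ≠ [] ∧
      (∀ y ∈ X, m + c + 1 < y) ∧ (Y ++ [n + 1]).head? ≠ some (m + c + 2) := by
  obtain ⟨m, r, rfl, hr⟩ := exists_eq_range'_append 1 l
  have hm : m < n := by
    have hlen := hl.length_eq
    rw [length_append, length_range'] at hlen
    refine lt_of_le_of_ne (by omega) fun hmn => hid ?_
    rw [idL_eq_range', ← hmn, eq_nil_of_length_eq_zero (by omega : r.length = 0), append_nil]
  have hmr : m + 1 ∈ r := by
    rcases mem_append.1 (hl.mem_iff.2 ⟨by omega, hm⟩ : m + 1 ∈ range' 1 m ++ r) with h | h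
    · rw [mem_range'_1] at h
      omega
    · exact h
  obtain ⟨X, s, rfl⟩ := append_of_mem hmr
  have hXne : X ≠ [] := by
    rintro rfl
    simp [Nat.add_comm] at hr
  obtain ⟨k, Y, hs, hY⟩ := exists_eq_range'_append (m + 1) ((m + 1) :: s)
  obtain ⟨c, rfl⟩ : ∃ c, k = c + 1 := by
    refine Nat.exists_eq_add_one.2 (Nat.pos_of_ne_zero ?_)
    rintro rfl
    rw [range'_zero, nil_append] at hs
    simp [← hs] at hY
  have hX : ∀ y ∈ X, m + c + 1 < y := by
    intro y hy
    have hnd : (range' 1 m ++ (X ++ (range' (m + 1) (c + 1) ++ Y))).Nodup := by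
      simpa only [hs] using hl.nodup
    have hyl := hl.mem_iff.1 (mem_append_right _ (mem_append_left _ hy))
    have hyA : y ∉ range' 1 m := fun h => disjoint_of_nodup_append hnd h (mem_append_left _ hy)
    have hyC : y ∉ range' (m + 1) (c + 1) := fun h =>
      disjoint_of_nodup_append hnd.of_append_right hy (mem_append_left _ h)
    rw [mem_range'_1] at hyA hyC
    omega
  refine ⟨m, c, X, Y, by rw [hs]; simp, hXne, hX, ?_⟩
  cases Y with
  | nil =>
    obtain ⟨x, hx⟩ := exists_mem_of_ne_nil X hXne
    have hxn := (hl.mem_iff.1 (mem_append_right _ (mem_append_left _ hx))).2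
    have := hX x hx
    simp only [nil_append, head?_cons, ne_eq, Option.some.injEq]
    omega
  | cons y Y =>
    simp only [head?_cons, ne_eq, Option.some.injEq, cons_append] at hY ⊢
    omega

theorem exists_monotoneBlockMove_bp_lt {n : ℕ} {l : List ℕ} (hl : IsPermList n l)
    (hid : l ≠ idL n) : ∃ l', IsMonotoneBlockMove l l' ∧ IsPermList n l' ∧ bp n l' < bp n l := by
  obtain ⟨m, c, X, Y, rfl, hXne, hX, hY⟩ := hl.exists_eq_block_append_run hid
  refine ⟨range' 1 m ++ range' (m + 1) (c + 1) ++ X ++ Y, ⟨range' 1 m, X, range' (m + 1) (c + 1), Y,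
    hXne, by simp, fun x hx y hy => ?_, rfl, rfl⟩, ?_, ?_⟩
  · have := hX x hx
    rw [mem_range'_1] at hy
    omega
  · refine List.Perm.trans ?_ hl
    simpa only [append_assoc] using ((perm_append_comm_assoc X _ Y).append_left _).symm
  · have key := breaks_swap_run_lt m c X (Y ++ [n + 1]) hXne hX (by simp) hY
    have hpre := breaks_range'_append 0 m
    simp only [Nat.zero_add] at hpre
    simpa only [bp_eq_breaks, append_assoc, hpre] using key

theorem SortsIn.refl (R : List ℕ → List ℕ → Prop) (l : List ℕ) : SortsIn R l l 0 :=
  ⟨fun _ => l, rfl, rfl, by simp⟩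

theorem SortsIn.cons {R : List ℕ → List ℕ → Prop} {l l' target : List ℕ} {t : ℕ}
    (h : R l l') (hs : SortsIn R l' target t) : SortsIn R l target (t + 1) := by
  obtain ⟨c, hc0, hct, hR⟩ := hs
  refine ⟨fun | 0 => l | i + 1 => c i, rfl, hct, fun i hi => ?_⟩
  cases i with
  | zero => simpa [hc0] using h
  | succ i => exact hR i (by omega)

/-- Any permutation can be sorted to the identity with at most `bp(π)`
monotone block moves; in particular `bc(π) ≤ bp(π)`. -/
theorem sorting_upper_bound_bp (n : ℕ) (l : List ℕ) (hl : IsPermList n l) :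
    ∃ t ≤ bp n l, SortsIn IsMonotoneBlockMove l (idL n) t := by
  induction hb : bp n l using Nat.strong_induction_on generalizing l with
  | _ b ih =>
    by_cases hid : l = idL n
    · exact ⟨0, Nat.zero_le b, hid ▸ SortsIn.refl _ _⟩
    obtain ⟨l', hmove, hl', hlt⟩ := exists_monotoneBlockMove_bp_lt hl hid
    obtain ⟨t, ht, hsort⟩ := ih _ (hb ▸ hlt) l' hl' rfl
    exact ⟨t + 1, by omega, hsort.cons hmove⟩
end

section
/- Sorting a permutation by single-element block moves is equivalent to successively extending a longest increasing subsequence: if π is not the identity and S is a longest increasing subsequence of π, then there exists a monotone single-element block move σ with lis(σπ) = lis(π) + 1. -/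
/-! Fix a longest increasing subsequence `s` of `π`. Each value `c` outside `s` has a gap of `π`
where inserting it would extend `s`, namely right after the largest element of `s` below `c`;
as `s` is longest, `c` does not already sit at that gap, so it lies either after it ("late") or
before it ("early"). If some value is late, move the leftmost late value left to its gap;
otherwise move the rightmost value outside `s`, which is early, right to its gap. These choices
force every element jumped over to be larger (resp. smaller) than `c`, so the move is monotone,
and moving one element raises `lis` by at most one. -/

namespace List

variable {α : Type*}

theorem Sublist.append_of_append_cons {t B D : List α} {x : α} (h : t <+ B ++ x :: D)
    (hx : x ∉ t) : t <+ B ++ D := by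
  obtain ⟨u, w, rfl, hu, hw⟩ := sublist_append_iff.mp h
  cases hw with
  | cons _ hw => exact hu.append hw
  | cons_cons _ _ => exact absurd (mem_append_right u mem_cons_self) hx

variable [BEq α] [LawfulBEq α] {l : List α} {x : α}

theorem drop_idxOf_eq_cons (hx : x ∈ l) : l.drop (l.idxOf x) = x :: l.drop (l.idxOf x + 1) := by
  rw [drop_eq_getElem_cons (idxOf_lt_length_iff.2 hx), getElem_idxOf]

theorem take_idxOf_add_one (hx : x ∈ l) : l.take (l.idxOf x + 1) = l.take (l.idxOf x) ++ [x] := by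
  rw [take_add_one, getElem?_idxOf hx]; rfl

theorem Nodup.mem_drop_iff (hl : l.Nodup) {i : ℕ} : x ∈ l.drop i ↔ x ∈ l ∧ i ≤ l.idxOf x := by
  have hsplit : x ∈ l ↔ x ∈ l.take i ∨ x ∈ l.drop i := by
    rw [← mem_append, take_append_drop]
  have hdisj := (nodup_append.mp (l.take_append_drop i ▸ hl)).2.2
  constructor
  · intro hx
    have hxl := hsplit.2 (Or.inr hx)
    exact ⟨hxl, not_lt.mp fun hlt => hdisj x ((mem_take_iff_idxOf_lt hxl).2 hlt) x hx rfl⟩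
  · rintro ⟨hxl, hle⟩
    exact (hsplit.1 hxl).resolve_left fun h =>
      absurd ((mem_take_iff_idxOf_lt hxl).1 h) (not_lt.2 hle)

theorem Nodup.idxOf_mem_Ico_of_mem_take_drop (hl : l.Nodup) {i k : ℕ}
    (hx : x ∈ (l.drop i).take k) : x ∈ l ∧ l.idxOf x ∈ Set.Ico i (i + k) := by
  have hxi := hl.mem_drop_iff.1 (mem_of_mem_take hx)
  have hxk : x ∈ l.take (i + k) := by rw [take_add]; exact mem_append_right _ hx
  exact ⟨hxi.1, hxi.2, (mem_take_iff_idxOf_lt hxi.1).1 hxk⟩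

theorem Nodup.pairwise_idxOf_lt (hl : l.Nodup) : l.Pairwise (l.idxOf · < l.idxOf ·) :=
  pairwise_iff_getElem.2 fun i j hi hj hij => by simpa [hl.idxOf_getElem] using hij

end List

open List

theorem idxOf_lt_idxOf_of_sublist {l s : List ℕ} (hl : l.Nodup) (hsl : s <+ l)
    (hs : s.Pairwise (· < ·)) {x y : ℕ} (hx : x ∈ s) (hy : y ∈ s) (hxy : x < y) :
    l.idxOf x < l.idxOf y := by
  let R := fun x y : ℕ => x < y → l.idxOf x < l.idxOf y
  have hR : s.Pairwise R := (hl.pairwise_idxOf_lt.sublist hsl).imp (S := R) fun h _ => h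
  have hflip : s.Pairwise (flip R) := hs.imp fun h h' => absurd h' (lt_asymm h)
  exact Pairwise.forall_of_forall_of_flip (fun _ _ h => absurd h (lt_irrefl _)) hR hflip hx hy hxy

theorem le_lis {l s : List ℕ} (hsl : s <+ l) (hs : s.Pairwise (· < ·)) : s.length ≤ lis l :=
  le_max_of_le' 0 (mem_map_of_mem (mem_filter.2 ⟨mem_sublists.2 hsl,
    by simpa [isChain_iff_pairwise] using hs⟩)) le_rfl

structure IsLIS (s l : List ℕ) : Prop where
  sublist : s <+ l
  pairwise : s.Pairwise (· < ·)
  length_eq : s.length = lis l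

theorem IsLIS.exists (l : List ℕ) : ∃ s, IsLIS s l := by
  set L := (l.sublists.filter fun s => decide (List.IsChain (· < ·) s)).map length
  have hL : L ≠ [] :=
    ne_nil_of_mem (mem_map_of_mem (mem_filter.2 ⟨mem_sublists.2 (nil_sublist l), by simp⟩))
  obtain ⟨s, hs, hlen⟩ := mem_map.1 (maximum_mem (foldr_max_of_ne_nil hL).symm)
  obtain ⟨hsl, hchain⟩ := mem_filter.1 hs
  exact ⟨s, mem_sublists.1 hsl, by simpa [isChain_iff_pairwise] using hchain, hlen⟩

theorem lis_mono {l₁ l₂ : List ℕ} (h : l₁ <+ l₂) : lis l₁ ≤ lis l₂ := by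
  obtain ⟨s, hs⟩ := IsLIS.exists l₁
  exact hs.length_eq ▸ le_lis (hs.sublist.trans h) hs.pairwise

theorem lis_append_cons_le (P Q : List ℕ) (c : ℕ) : lis (P ++ c :: Q) ≤ lis (P ++ Q) + 1 := by
  obtain ⟨t, ht⟩ := IsLIS.exists (P ++ c :: Q)
  rw [← ht.length_eq]
  obtain ⟨u, w, rfl, hu, hw⟩ := sublist_append_iff.mp ht.sublist
  cases hw with
  | cons _ hw => exact (le_lis (hu.append hw) ht.pairwise).trans (Nat.le_succ _)
  | @cons_cons w _ _ hw =>
    have := le_lis (hu.append hw) (ht.pairwise.sublist ((sublist_cons_self c w).append_left u))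
    simp only [length_append, length_cons] at this ⊢
    omega

theorem length_lt_lis_append_cons {s₁ s₂ P Q : List ℕ} {c : ℕ} (hs : (s₁ ++ s₂).Pairwise (· < ·))
    (h₁ : s₁ <+ P) (h₂ : s₂ <+ Q) (hlt : ∀ x ∈ s₁, x < c) (hgt : ∀ x ∈ s₂, c < x) :
    (s₁ ++ s₂).length < lis (P ++ c :: Q) := by
  have hins : (s₁ ++ c :: s₂).Pairwise (· < ·) := by
    rw [pairwise_append] at hs ⊢
    refine ⟨hs.1, pairwise_cons.2 ⟨hgt, hs.2.1⟩, fun x hx y hy => ?_⟩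
    rcases mem_cons.1 hy with rfl | hy
    exacts [hlt x hx, hs.2.2 x hx y hy]
  have := le_lis (h₁.append (h₂.cons_cons c)) hins
  simp only [length_append, length_cons] at this ⊢
  omega

theorem lis_append_cons_eq {s₁ s₂ P Q l : List ℕ} {c : ℕ} (hs : IsLIS (s₁ ++ s₂) l)
    (hPQ : P ++ Q <+ l) (h₁ : s₁ <+ P) (h₂ : s₂ <+ Q) (hlt : ∀ x ∈ s₁, x < c)
    (hgt : ∀ x ∈ s₂, c < x) : lis (P ++ c :: Q) = lis l + 1 := by
  have hle := (lis_append_cons_le P Q c).trans (Nat.add_le_add_right (lis_mono hPQ) 1)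
  have hge := length_lt_lis_append_cons hs.pairwise h₁ h₂ hlt hgt
  rw [hs.length_eq] at hge
  omega

section InsertionGap

variable {l s : List ℕ} {c g : ℕ}

theorem exists_split_of_gap (hl : l.Nodup) (hsl : s <+ l) (hcs : c ∉ s)
    (hg : ∀ x ∈ s, x < c ↔ l.idxOf x < g) :
    ∃ s₁ s₂, s = s₁ ++ s₂ ∧ s₁ <+ l.take g ∧ s₂ <+ l.drop g ∧
      (∀ x ∈ s₁, x < c) ∧ ∀ x ∈ s₂, c < x := by
  obtain ⟨s₁, s₂, rfl, h₁, h₂⟩ := sublist_append_iff.mp (l.take_append_drop g ▸ hsl)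
  refine ⟨s₁, s₂, rfl, h₁, h₂, fun x hx => ?_, fun x hx => ?_⟩
  · have hxl := mem_of_mem_take (h₁.subset hx)
    exact (hg x (mem_append_left _ hx)).2 ((mem_take_iff_idxOf_lt hxl).1 (h₁.subset hx))
  · have hgx := (hl.mem_drop_iff.1 (h₂.subset hx)).2
    refine lt_of_le_of_ne (not_lt.1 fun hxc => ?_) fun hcx => hcs (hcx ▸ mem_append_right _ hx)
    exact absurd ((hg x (mem_append_right _ hx)).1 hxc) (not_lt.2 hgx)

theorem exists_monoSingleBlockMove_left (hl : l.Nodup) (hs : IsLIS s l) (hc : c ∈ l) (hcs : c ∉ s)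
    (hg : ∀ x ∈ s, x < c ↔ l.idxOf x < g) (hgc : g < l.idxOf c)
    (hblock : ∀ x ∈ l, g ≤ l.idxOf x → l.idxOf x < l.idxOf c → c < x) :
    ∃ l', IsMonoSingleBlockMove l l' ∧ lis l' = lis l + 1 := by
  set B := (l.drop g).take (l.idxOf c - g)
  set D := l.drop (l.idxOf c + 1)
  have hdrop : l.drop g = B ++ c :: D := by
    rw [← drop_idxOf_eq_cons hc, ← drop_take_append_drop, Nat.add_sub_cancel' hgc.le]
  have hl_eq : l = l.take g ++ B ++ c :: D := by rw [append_assoc, ← hdrop, take_append_drop]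
  have hB : B ≠ [] := by
    have := idxOf_lt_length_iff.2 hc
    simp only [B, ne_eq, take_eq_nil_iff, drop_eq_nil_iff]
    omega
  obtain ⟨s₁, s₂, rfl, h₁, h₂, hlt, hgt⟩ := exists_split_of_gap hl hs.sublist hcs hg
  refine ⟨l.take g ++ [c] ++ B ++ D,
    ⟨l.take g, B, [c], D, hB, by simp, Or.inr rfl, ?_, by simpa using hl_eq, rfl⟩, ?_⟩
  · intro x hx y hy
    rw [mem_singleton.1 hy]
    obtain ⟨hxl, hgx, hxc⟩ := hl.idxOf_mem_Ico_of_mem_take_drop hx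
    exact hblock x hxl hgx (by omega)
  · have hPQ : l.take g ++ (B ++ D) <+ l := by
      conv_rhs => rw [hl_eq]
      simp
    simpa using lis_append_cons_eq hs hPQ h₁
      ((hdrop ▸ h₂).append_of_append_cons fun h => hcs (mem_append_right _ h)) hlt hgt

theorem exists_monoSingleBlockMove_right (hl : l.Nodup) (hs : IsLIS s l) (hc : c ∈ l)
    (hcs : c ∉ s) (hg : ∀ x ∈ s, x < c ↔ l.idxOf x < g) (hcg : l.idxOf c + 1 < g)
    (hgl : g ≤ l.length)
    (hblock : ∀ x ∈ l, l.idxOf c < l.idxOf x → l.idxOf x < g → x < c) :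
    ∃ l', IsMonoSingleBlockMove l l' ∧ lis l' = lis l + 1 := by
  set A := l.take (l.idxOf c)
  set C := (l.drop (l.idxOf c + 1)).take (g - (l.idxOf c + 1))
  have htake : l.take g = A ++ c :: C := by
    conv_lhs => rw [← Nat.add_sub_cancel' hcg.le, take_add, take_idxOf_add_one hc]
    simp [A, C]
  have hl_eq : l = A ++ [c] ++ C ++ l.drop g := by
    simpa [htake] using (take_append_drop g l).symm
  have hC : C ≠ [] := by
    simp only [C, ne_eq, take_eq_nil_iff, drop_eq_nil_iff]
    omega
  obtain ⟨s₁, s₂, rfl, h₁, h₂, hlt, hgt⟩ := exists_split_of_gap hl hs.sublist hcs hg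
  refine ⟨A ++ C ++ [c] ++ l.drop g,
    ⟨A, [c], C, l.drop g, by simp, hC, Or.inl rfl, ?_, hl_eq, rfl⟩, ?_⟩
  · intro x hx y hy
    rw [mem_singleton.1 hx]
    obtain ⟨hyl, hcy, hyg⟩ := hl.idxOf_mem_Ico_of_mem_take_drop hy
    exact hblock y hyl (by omega) (by omega)
  · have hPQ : A ++ C ++ l.drop g <+ l := by
      conv_rhs => rw [hl_eq]
      simp
    simpa using lis_append_cons_eq hs hPQ
      ((htake ▸ h₁).append_of_append_cons fun h => hcs (mem_append_left _ h)) h₂ hlt hgt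

/-- Inserting `c` at gap `g` places it just before position `g` of `l`. This gap is one past the
position of the largest element of `s` below `c`, and `0` if there is none. -/
def insertGap (l s : List ℕ) (c : ℕ) : ℕ :=
  (s.toFinset.filter (· < c)).sup (l.idxOf · + 1)

theorem lt_iff_idxOf_lt_insertGap (hl : l.Nodup) (hsl : s <+ l) (hs : s.Pairwise (· < ·)) :
    ∀ x ∈ s, x < c ↔ l.idxOf x < insertGap l s c := by
  refine fun x hx => ⟨fun h => Finset.le_sup (f := (l.idxOf · + 1)) (by simp [hx, h]), fun h => ?_⟩
  obtain ⟨y, hy, hxy⟩ := Finset.lt_sup_iff.1 h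
  obtain ⟨hys, hyc⟩ : y ∈ s ∧ y < c := by simpa using hy
  by_contra hcx
  have := idxOf_lt_idxOf_of_sublist hl hsl hs hys hx (by omega)
  omega

theorem insertGap_mono : Monotone (insertGap l s) := fun _ _ h =>
  Finset.sup_mono (Finset.monotone_filter_right _ fun _ _ hx => lt_of_lt_of_le hx h)

theorem insertGap_le_length (hsl : s <+ l) : insertGap l s c ≤ l.length :=
  Finset.sup_le fun x hx => idxOf_lt_length_iff.2 (hsl.subset (by simpa using hx : x ∈ s ∧ _).1)

theorem insertGap_lt_idxOf_or_idxOf_add_one_lt (hl : l.Nodup) (hs : IsLIS s l) (hc : c ∈ l)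
    (hcs : c ∉ s) : insertGap l s c < l.idxOf c ∨ l.idxOf c + 1 < insertGap l s c := by
  by_contra! h
  have hg : ∀ x ∈ s, x < c ↔ l.idxOf x < l.idxOf c := fun x hx => by
    have hne : l.idxOf x ≠ l.idxOf c := fun heq =>
      hcs ((idxOf_inj (hs.sublist.subset hx)).1 heq ▸ hx)
    rw [lt_iff_idxOf_lt_insertGap hl hs.sublist hs.pairwise x hx]
    omega
  obtain ⟨s₁, s₂, rfl, h₁, h₂, hlt, hgt⟩ := exists_split_of_gap hl hs.sublist hcs hg
  rw [drop_idxOf_eq_cons hc] at h₂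
  have h₂' : s₂ <+ l.drop (l.idxOf c + 1) :=
    Sublist.append_of_append_cons (B := []) h₂ fun h => hcs (mem_append_right _ h)
  have := length_lt_lis_append_cons hs.pairwise h₁ h₂' hlt hgt
  rw [← drop_idxOf_eq_cons hc, take_append_drop, ← hs.length_eq] at this
  exact lt_irrefl _ this

theorem exists_monoSingleBlockMove_of_exists_insertGap_lt (hl : l.Nodup) (hs : IsLIS s l)
    (hlate : ∃ c ∈ l, c ∉ s ∧ insertGap l s c < l.idxOf c) :
    ∃ l', IsMonoSingleBlockMove l l' ∧ lis l' = lis l + 1 := by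
  classical
  obtain ⟨c, hc, hmin⟩ := (l.toFinset.filter fun c => c ∉ s ∧ insertGap l s c < l.idxOf c)
    |>.exists_min_image l.idxOf (by simpa [Finset.Nonempty] using hlate)
  simp only [Finset.mem_filter, mem_toFinset, and_imp] at hc hmin
  have hgap := lt_iff_idxOf_lt_insertGap (c := c) hl hs.sublist hs.pairwise
  refine exists_monoSingleBlockMove_left hl hs hc.1 hc.2.1 hgap hc.2.2 fun x hxl hgx hxc => ?_
  by_contra! hxc_le
  have hxc_lt : x < c := lt_of_le_of_ne hxc_le fun h => by subst h; omega
  have hxs : x ∉ s := fun hxs => absurd ((hgap x hxs).1 hxc_lt) (not_lt.2 hgx)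
  have hmono := insertGap_mono (l := l) (s := s) hxc_lt.le
  rcases insertGap_lt_idxOf_or_idxOf_add_one_lt hl hs hxl hxs with h | h
  · have := hmin x hxl hxs h
    omega
  · omega

theorem exists_monoSingleBlockMove_of_forall_idxOf_le_insertGap (hl : l.Nodup) (hs : IsLIS s l)
    (hmiss : ∃ c ∈ l, c ∉ s) (hearly : ∀ c ∈ l, c ∉ s → l.idxOf c ≤ insertGap l s c) :
    ∃ l', IsMonoSingleBlockMove l l' ∧ lis l' = lis l + 1 := by
  classical
  obtain ⟨c, hc, hmax⟩ := (l.toFinset.filter (· ∉ s)).exists_max_image l.idxOf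
    (by simpa [Finset.Nonempty] using hmiss)
  simp only [Finset.mem_filter, mem_toFinset] at hc hmax
  have hgap := lt_iff_idxOf_lt_insertGap (c := c) hl hs.sublist hs.pairwise
  have hcg := (insertGap_lt_idxOf_or_idxOf_add_one_lt hl hs hc.1 hc.2).resolve_left
    (not_lt.2 (hearly c hc.1 hc.2))
  refine exists_monoSingleBlockMove_right hl hs hc.1 hc.2 hgap hcg
    (insertGap_le_length hs.sublist) fun y hyl hcy hyg => ?_
  by_contra! hcy_le
  have hcy_lt : c < y := lt_of_le_of_ne hcy_le fun h => by subst h; omega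
  by_cases hys : y ∈ s
  · exact absurd ((hgap y hys).2 hyg) (not_lt.2 hcy_lt.le)
  · have := hmax y ⟨hyl, hys⟩
    omega

end InsertionGap

theorem exists_monoSingleBlockMove_lis_eq_succ {l : List ℕ} (hl : l.Nodup)
    (hsort : ¬ l.Pairwise (· < ·)) : ∃ l', IsMonoSingleBlockMove l l' ∧ lis l' = lis l + 1 := by
  obtain ⟨s, hs⟩ := IsLIS.exists l
  have hmiss : ∃ c ∈ l, c ∉ s := by
    by_contra! hsub
    have hlen := (hl.subperm fun x hx => hsub x hx).length_le
    exact hsort (hs.sublist.eq_of_length_le hlen ▸ hs.pairwise)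
  by_cases hlate : ∃ c ∈ l, c ∉ s ∧ insertGap l s c < l.idxOf c
  · exact exists_monoSingleBlockMove_of_exists_insertGap_lt hl hs hlate
  · push Not at hlate
    exact exists_monoSingleBlockMove_of_forall_idxOf_le_insertGap hl hs hmiss hlate

theorem pairwise_lt_idL (n : ℕ) : (idL n).Pairwise (· < ·) :=
  (pairwise_lt_range (n := n)).map _ fun _ _ h => Nat.add_lt_add_right h 1

/-- If `π` is not the identity, there is a monotone single-element block move
that extends a longest increasing subsequence, i.e., increases `lis` by one. -/
theorem exists_lis_increasing_move (n : ℕ) (l : List ℕ)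
    (hl : IsPermList n l) (hne : l ≠ idL n) :
    ∃ l' : List ℕ, IsMonoSingleBlockMove l l' ∧ lis l' = lis l + 1 :=
  exists_monoSingleBlockMove_lis_eq_succ (hl.nodup_iff.2 (pairwise_lt_idL n).nodup) fun hsort =>
    hne (hl.eq_of_pairwise (fun _ _ _ _ h h' => absurd (h.trans h') (lt_irrefl _)) hsort
      (pairwise_lt_idL n))
end
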